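/- (Reilly) Let n ≥ 1, let F be a C^∞ function on an open set of ℝ^{n+1}, let Ω be a connected open set on which U(F) is nowhere zero, and let r ∈ F(Ω). Define G := |U(F)|^{−1/(n+2)}·(F − r) on Ω. Then at every point of the level set { x ∈ Ω : F(x) = r } one has U(G) = sign(U(F)); in particular |U(G)| = 1 along this level set. -/

import Mathlib

open Matrix

noncomputable def pd1 {ι : Type*} [Fintype ι] [DecidableEq ι]
    (F : (ι → ℝ) → ℝ) (i : ι) (x : ι → ℝ) : ℝ :=
  fderiv ℝ F x (Pi.single i 1)

noncomputable def gradv {ι : Type*} [Fintype ι] [DecidableEq ι]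
    (F : (ι → ℝ) → ℝ) (x : ι → ℝ) : ι → ℝ :=
  fun i => pd1 F i x

noncomputable def hessM {ι : Type*} [Fintype ι] [DecidableEq ι]
    (F : (ι → ℝ) → ℝ) (x : ι → ℝ) : Matrix ι ι ℝ :=
  Matrix.of fun i j => pd1 (pd1 F j) i x

noncomputable def Hdet {ι : Type*} [Fintype ι] [DecidableEq ι]
    (F : (ι → ℝ) → ℝ) (x : ι → ℝ) : ℝ :=
  (hessM F x).det

noncomputable def Nvec {ι : Type*} [Fintype ι] [DecidableEq ι]
    (F : (ι → ℝ) → ℝ) (x : ι → ℝ) : ι → ℝ :=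
  (hessM F x).adjugate *ᵥ gradv F x

noncomputable def Uval {ι : Type*} [Fintype ι] [DecidableEq ι]
    (F : (ι → ℝ) → ℝ) (x : ι → ℝ) : ℝ :=
  gradv F x ⬝ᵥ Nvec F x

/-! On the level set, `G = c * (F - r)` with `c = |U(F)|^(-1/(n+2))` and `F - r = 0`, so
`∇G = c ∇F` and `Hess G = c (Hess F + ∇F aᵀ + a ∇Fᵀ)` with `a = ∇c / c`. The form `gᵀ adj(H) g`
is minus the determinant of `H` bordered by `g`, and adding `g aᵀ + a gᵀ` to `H` conjugates the
bordered matrix by a unipotent one, so the form is unchanged. Hence `U(G) = c^(n+2) U(F)`,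
which is `U(F) / |U(F)|`. -/

section Smoothness

variable {𝕜 E κ : Type*} [NontriviallyNormedField 𝕜] [NormedAddCommGroup E] [NormedSpace 𝕜 E]
  [Fintype κ] [DecidableEq κ] {M : E → Matrix κ κ 𝕜} {x : E} {n : WithTop ℕ∞}

lemma contDiffAt_det (h : ∀ i j, ContDiffAt 𝕜 n (fun y => M y i j) x) :
    ContDiffAt 𝕜 n (fun y => (M y).det) x := by
  simp only [det_apply']
  exact ContDiffAt.sum fun σ _ => contDiffAt_const.mul (contDiffAt_prod fun i _ => h (σ i) i)

lemma contDiffAt_adjugate (h : ∀ i j, ContDiffAt 𝕜 n (fun y => M y i j) x) (i j : κ) :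
    ContDiffAt 𝕜 n (fun y => (M y).adjugate i j) x := by
  simp only [adjugate_apply]
  refine contDiffAt_det fun k l => ?_
  rcases eq_or_ne k j with rfl | hk
  · simpa only [updateRow_self] using contDiffAt_const
  · simpa only [updateRow_ne hk] using h k l

end Smoothness

section Bordered

variable {ι R : Type*} [Fintype ι] [DecidableEq ι]

def borderedMatrix [Zero R] (H : Matrix ι ι R) (g : ι → R) : Matrix (Unit ⊕ ι) (Unit ⊕ ι) R :=
  fromBlocks 0 (replicateRow Unit g) (replicateCol Unit g) H

lemma det_borderedMatrix_of_isUnit [CommRing R] {H : Matrix ι ι R} (hH : IsUnit H.det)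
    (g : ι → R) : (borderedMatrix H g).det = -(g ⬝ᵥ H.adjugate *ᵥ g) := by
  let := H.invertibleOfIsUnitDet hH
  rw [borderedMatrix, det_fromBlocks₂₂, det_unique (0 - _), Matrix.sub_apply, Matrix.zero_apply,
    zero_sub, Matrix.mul_assoc, ← replicateCol_mulVec, replicateRow_mul_replicateCol_apply,
    invOf_eq_nonsing_inv, Matrix.inv_def, smul_mulVec, dotProduct_smul, smul_eq_mul, mul_neg,
    ← mul_assoc, Ring.mul_inverse_cancel _ hH, one_mul]

lemma det_borderedMatrix (H : Matrix ι ι ℝ) (g : ι → ℝ) :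
    (borderedMatrix H g).det = -(g ⬝ᵥ H.adjugate *ᵥ g) := by
  -- `H + t • 1` is invertible for all `t` off the finite spectrum of `-H`; let `t → 0`.
  have hdense : Dense (spectrum ℝ (-H))ᶜ := (Matrix.finite_spectrum (-H)).countable.dense_compl ℝ
  have hperturbed : Set.EqOn (fun t : ℝ => (borderedMatrix (H + t • 1) g).det)
      (fun t => -(g ⬝ᵥ (H + t • 1).adjugate *ᵥ g)) (spectrum ℝ (-H))ᶜ := by
    intro t ht
    rw [Set.mem_compl_iff, spectrum.mem_iff, not_not, Algebra.algebraMap_eq_smul_one,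
      sub_neg_eq_add, add_comm, Matrix.isUnit_iff_isUnit_det] at ht
    exact det_borderedMatrix_of_isUnit ht g
  have hext := Continuous.ext_on hdense (by unfold borderedMatrix; fun_prop) (by fun_prop) hperturbed
  simpa using congr_fun hext 0

lemma borderedMatrix_add_vecMulVec [CommRing R] (H : Matrix ι ι R) (g a : ι → R) :
    borderedMatrix (H + vecMulVec g a + vecMulVec a g) g =
      fromBlocks 1 0 (replicateCol Unit a) 1 * borderedMatrix H g *
        (fromBlocks 1 0 (replicateCol Unit a) 1)ᵀ := by
  rw [fromBlocks_transpose, transpose_one, transpose_zero, transpose_replicateCol, borderedMatrix,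
    borderedMatrix, fromBlocks_multiply, fromBlocks_multiply, vecMulVec_eq Unit, vecMulVec_eq Unit]
  congr 1 <;> simp
  abel

lemma dotProduct_adjugate_add_vecMulVec_mulVec (H : Matrix ι ι ℝ) (g a : ι → ℝ) :
    g ⬝ᵥ (H + vecMulVec g a + vecMulVec a g).adjugate *ᵥ g = g ⬝ᵥ H.adjugate *ᵥ g := by
  have h := congr_arg det (borderedMatrix_add_vecMulVec H g a)
  rw [det_borderedMatrix, det_mul, det_mul, det_transpose, det_fromBlocks_zero₁₂, det_one, det_one,
    det_borderedMatrix] at h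
  simpa using h

end Bordered

section PartialDerivatives

variable {ι : Type*} [Fintype ι] [DecidableEq ι]

lemma pd1_sub_const (f : (ι → ℝ) → ℝ) (r : ℝ) (i : ι) : pd1 (fun y => f y - r) i = pd1 f i := by
  funext x
  simp only [pd1, fderiv_sub_const]

lemma uval_sub_const (f : (ι → ℝ) → ℝ) (r : ℝ) : Uval (fun y => f y - r) = Uval f := by
  funext x
  unfold Uval Nvec gradv hessM
  simp only [pd1_sub_const]

lemma pd1_add {f g : (ι → ℝ) → ℝ} {x : ι → ℝ} (hf : DifferentiableAt ℝ f x)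
    (hg : DifferentiableAt ℝ g x) (i : ι) :
    pd1 (fun y => f y + g y) i x = pd1 f i x + pd1 g i x := by
  simp [pd1, fderiv_fun_add hf hg]

lemma pd1_mul {f g : (ι → ℝ) → ℝ} {x : ι → ℝ} (hf : DifferentiableAt ℝ f x)
    (hg : DifferentiableAt ℝ g x) (i : ι) :
    pd1 (fun y => f y * g y) i x = f x * pd1 g i x + g x * pd1 f i x := by
  simp [pd1, fderiv_fun_mul hf hg]

lemma Filter.EventuallyEq.pd1_eq {f g : (ι → ℝ) → ℝ} {x : ι → ℝ} (h : f =ᶠ[nhds x] g) (i : ι) :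
    pd1 f i x = pd1 g i x := by
  rw [pd1, pd1, h.fderiv_eq]

lemma ContDiffAt.pd1 {m : WithTop ℕ∞} {f : (ι → ℝ) → ℝ} {x : ι → ℝ}
    (hf : ContDiffAt ℝ (m + 1) f x) (i : ι) : ContDiffAt ℝ m (pd1 f i) x :=
  hf.fderiv_right_succ.clm_apply contDiffAt_const

lemma ContDiffAt.uval {f : (ι → ℝ) → ℝ} {x : ι → ℝ} {n : WithTop ℕ∞}
    (hf : ContDiffAt ℝ (n + 2) f x) : ContDiffAt ℝ n (Uval f) x := by
  have hf1 : ContDiffAt ℝ (n + 1 + 1) f x := by rwa [add_assoc, one_add_one_eq_two]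
  have hgrad : ∀ i, ContDiffAt ℝ n (fun y => gradv f y i) x :=
    fun i => (hf1.pd1 i).of_le le_self_add
  have hadj : ∀ i j, ContDiffAt ℝ n (fun y => (hessM f y).adjugate i j) x :=
    contDiffAt_adjugate fun i j => (hf1.pd1 j).pd1 i
  show ContDiffAt ℝ n (fun y => ∑ i, gradv f y i * ∑ j, (hessM f y).adjugate i j * gradv f y j) x
  exact ContDiffAt.sum fun i _ => (hgrad i).mul (ContDiffAt.sum fun j _ => (hadj i j).mul (hgrad j))

lemma gradv_mul_of_eq_zero {c f : (ι → ℝ) → ℝ} {x : ι → ℝ} (hc : DifferentiableAt ℝ c x)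
    (hf : DifferentiableAt ℝ f x) (hfx : f x = 0) :
    gradv (fun y => c y * f y) x = c x • gradv f x := by
  funext i
  simp [gradv, pd1_mul hc hf, hfx]

lemma hessM_mul_of_eq_zero {c f : (ι → ℝ) → ℝ} {x : ι → ℝ} (hc : ContDiffAt ℝ 2 c x)
    (hf : ContDiffAt ℝ 2 f x) (hfx : f x = 0) :
    hessM (fun y => c y * f y) x =
      c x • hessM f x + vecMulVec (gradv c x) (gradv f x) + vecMulVec (gradv f x) (gradv c x) := by
  have hdiff : ∀ {h : (ι → ℝ) → ℝ} {y}, ContDiffAt ℝ 2 h y → DifferentiableAt ℝ h y :=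
    fun h => h.differentiableAt (by norm_num)
  have hpd1 : ∀ {h : (ι → ℝ) → ℝ} (j), ContDiffAt ℝ 2 h x → DifferentiableAt ℝ (pd1 h j) x :=
    fun j h => (ContDiffAt.pd1 (m := 1) h j).differentiableAt one_ne_zero
  ext i j
  have hnear : pd1 (fun y => c y * f y) j =ᶠ[nhds x]
      fun y => c y * pd1 f j y + f y * pd1 c j y := by
    filter_upwards [hc.eventually (by simp), hf.eventually (by simp)] with y hcy hfy
    exact pd1_mul (hdiff hcy) (hdiff hfy) j
  rw [hessM, of_apply, hnear.pd1_eq,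
    pd1_add ((hdiff hc).fun_mul (hpd1 j hf)) ((hdiff hf).fun_mul (hpd1 j hc)),
    pd1_mul (hdiff hc) (hpd1 j hf), pd1_mul (hdiff hf) (hpd1 j hc), hfx]
  simp only [gradv, hessM, Matrix.add_apply, Matrix.smul_apply, of_apply, vecMulVec_apply,
    smul_eq_mul]
  ring

lemma uval_mul_of_eq_zero [Nonempty ι] {c f : (ι → ℝ) → ℝ} {x : ι → ℝ} (hc : ContDiffAt ℝ 2 c x)
    (hf : ContDiffAt ℝ 2 f x) (hfx : f x = 0) :
    Uval (fun y => c y * f y) x = c x ^ (Fintype.card ι + 1) * Uval f x := by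
  rw [Uval, Uval, Nvec, Nvec, gradv_mul_of_eq_zero (hc.differentiableAt two_ne_zero)
    (hf.differentiableAt two_ne_zero) hfx, hessM_mul_of_eq_zero hc hf hfx]
  rcases eq_or_ne (c x) 0 with hc0 | hc0
  · simp [hc0]
  set g := gradv f x
  set a := gradv c x
  have hscale : c x • hessM f x + vecMulVec a g + vecMulVec g a =
      c x • (hessM f x + vecMulVec g ((c x)⁻¹ • a) + vecMulVec ((c x)⁻¹ • a) g) := by
    simp only [smul_add, smul_vecMulVec, vecMulVec_smul, smul_smul, mul_inv_cancel₀ hc0, one_smul]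
    abel
  obtain ⟨k, hk⟩ := Nat.exists_eq_add_one_of_ne_zero (Fintype.card_ne_zero (α := ι))
  rw [hscale, adjugate_smul, smul_mulVec, mulVec_smul, smul_dotProduct, dotProduct_smul,
    dotProduct_smul, dotProduct_adjugate_add_vecMulVec_mulVec, smul_eq_mul, smul_eq_mul,
    smul_eq_mul, hk, Nat.add_sub_cancel]
  ring

end PartialDerivatives

lemma Real.inv_abs_mul_self (u : ℝ) : |u|⁻¹ * u = Real.sign u := by
  rcases lt_trichotomy u 0 with hu | rfl | hu
  · rw [Real.sign_of_neg hu, abs_of_neg hu, inv_neg, neg_mul, inv_mul_cancel₀ hu.ne]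
  · simp
  · rw [Real.sign_of_pos hu, abs_of_pos hu, inv_mul_cancel₀ hu.ne']

lemma Real.abs_sign_of_ne_zero {u : ℝ} (hu : u ≠ 0) : |Real.sign u| = 1 := by
  rcases Real.sign_apply_eq_of_ne_zero u hu with h | h <;> simp [h]

theorem stmt9_general (n : ℕ)
    (Ω : Set (Fin (n+1) → ℝ)) (hΩ : IsOpen Ω)
    (F : (Fin (n+1) → ℝ) → ℝ) (hF : ContDiffOn ℝ (⊤ : ℕ∞) F Ω)
    (hU : ∀ x ∈ Ω, Uval F x ≠ 0)
    (r : ℝ)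
    (G : (Fin (n+1) → ℝ) → ℝ)
    (hG : ∀ x, G x = |Uval F x| ^ (-(1 : ℝ)/((n : ℝ)+2)) * (F x - r)) :
    ∀ x ∈ Ω, F x = r → Uval G x = Real.sign (Uval F x) ∧ |Uval G x| = 1 := by
  intro x hx hFx
  set p : ℝ := -1 / ((n : ℝ) + 2)
  have hFsmooth : ContDiffAt ℝ (2 + 2 : WithTop ℕ∞) F x :=
    ((hF x hx).contDiffAt (hΩ.mem_nhds hx)).of_le (WithTop.coe_le_coe.2 le_top)
  have hc : ContDiffAt ℝ 2 (fun y => |Uval F y| ^ p) x :=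
    ((contDiffAt_abs (hU x hx)).comp x hFsmooth.uval).rpow_const_of_ne (abs_ne_zero.2 (hU x hx))
  have hexp : p * ((n + 1 + 1 : ℕ) : ℝ) = -1 := by
    simp only [p]; push_cast; field_simp; ring
  have hUG : Uval G x = Real.sign (Uval F x) := by
    rw [funext hG,
      uval_mul_of_eq_zero hc ((hFsmooth.of_le le_add_self).sub contDiffAt_const) (sub_eq_zero.2 hFx),
      uval_sub_const, Fintype.card_fin, ← Real.rpow_natCast, ← Real.rpow_mul (abs_nonneg _), hexp,
      Real.rpow_neg_one, Real.inv_abs_mul_self]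
  exact ⟨hUG, hUG ▸ Real.abs_sign_of_ne_zero (hU x hx)⟩

/-- Reilly: with `G = |U(F)|^{−1/(n+2)}·(F − r)`, along the level set
`{F = r}` one has `U(G) = sign(U(F))`, so `|U(G)| = 1` there. -/
theorem stmt9 (n : ℕ) (hn : 1 ≤ n)
    (Ω : Set (Fin (n+1) → ℝ)) (hΩ : IsOpen Ω) (hΩconn : IsConnected Ω)
    (F : (Fin (n+1) → ℝ) → ℝ) (hF : ContDiffOn ℝ (⊤ : ℕ∞) F Ω)
    (hU : ∀ x ∈ Ω, Uval F x ≠ 0)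
    (r : ℝ) (hr : r ∈ F '' Ω)
    (G : (Fin (n+1) → ℝ) → ℝ)
    (hG : ∀ x, G x = |Uval F x| ^ (-(1 : ℝ)/((n : ℝ)+2)) * (F x - r)) :
    ∀ x ∈ Ω, F x = r → Uval G x = Real.sign (Uval F x) ∧ |Uval G x| = 1 :=
  stmt9_general n Ω hΩ F hF hU r G hG
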